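/- (Corollary: ℓ₁ and operator-∞ bounds for (G − αΛ)^{-1} G) Let x be in the interior of K and let w be a positive vector satisfying the John fixed-point equations at x. Define G = diag(w), Λ = Σ_{x,w} − P_{x,w}^{(2)}, and κ = (1−α)^{-1} = log₂(2m/d). Then for every i ∈ [m], ‖G (G − αΛ)^{-1} e_i‖₁ ≤ 3 √d · κ^{3/2}, where e_i is the i-th standard basis vector of ℝ^m; consequently the operator ∞-norm satisfies ‖(G − αΛ)^{-1} G‖_∞ ≤ 3 √d · κ^{3/2}. -/

import Mathlib

open Matrix MeasureTheory Real Set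
open scoped ENNReal

noncomputable section

namespace PolytopeWalks

/-- Slackness `s_{x,i} = b_i − a_i^⊤ x`. -/
def slack {d m : ℕ} (A : Matrix (Fin m) (Fin d) ℝ) (b : Fin m → ℝ) (x : Fin d → ℝ)
    (i : Fin m) : ℝ :=
  b i - A.mulVec x i

/-- The polytope `K = {x : A x ≤ b}`. -/
def poly {d m : ℕ} (A : Matrix (Fin m) (Fin d) ℝ) (b : Fin m → ℝ) : Set (Fin d → ℝ) :=
  {x | ∀ i, A.mulVec x i ≤ b i}

/-- The interior of the polytope: all slacks positive. -/
def interiorPoly {d m : ℕ} (A : Matrix (Fin m) (Fin d) ℝ) (b : Fin m → ℝ) :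
    Set (Fin d → ℝ) :=
  {x | ∀ i, 0 < slack A b x i}

/-- Hessian of the logarithmic barrier, `∇²F_x = Σ_i a_i a_i^⊤ / s_{x,i}²`. -/
def logHess {d m : ℕ} (A : Matrix (Fin m) (Fin d) ℝ) (b : Fin m → ℝ) (x : Fin d → ℝ) :
    Matrix (Fin d) (Fin d) ℝ :=
  ∑ i : Fin m, ((slack A b x i) ^ 2)⁻¹ • vecMulVec (A i) (A i)

/-- Leverage scores `σ_{x,i} = a_i^⊤ (∇²F_x)⁻¹ a_i / s_{x,i}²`. -/
def lev {d m : ℕ} (A : Matrix (Fin m) (Fin d) ℝ) (b : Fin m → ℝ) (x : Fin d → ℝ)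
    (i : Fin m) : ℝ :=
  (A i) ⬝ᵥ ((logHess A b x)⁻¹ *ᵥ (A i)) / (slack A b x i) ^ 2

/-- The Vaidya matrix `V_x = Σ_i (σ_{x,i} + d/m) a_i a_i^⊤ / s_{x,i}²`. -/
def vaidyaMat {d m : ℕ} (A : Matrix (Fin m) (Fin d) ℝ) (b : Fin m → ℝ) (x : Fin d → ℝ) :
    Matrix (Fin d) (Fin d) ℝ :=
  ∑ i : Fin m, ((lev A b x i + (d : ℝ) / m) / (slack A b x i) ^ 2) • vecMulVec (A i) (A i)

/-- Vaidya local norm `‖v‖_{V_x} = (v^⊤ V_x v)^{1/2}`. -/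
def vNorm {d m : ℕ} (A : Matrix (Fin m) (Fin d) ℝ) (b : Fin m → ℝ) (x v : Fin d → ℝ) : ℝ :=
  Real.sqrt (v ⬝ᵥ (vaidyaMat A b x *ᵥ v))

/-- Vaidya slack sensitivities `θ_{x,i} = a_i^⊤ V_x⁻¹ a_i / s_{x,i}²`. -/
def thetaV {d m : ℕ} (A : Matrix (Fin m) (Fin d) ℝ) (b : Fin m → ℝ) (x : Fin d → ℝ)
    (i : Fin m) : ℝ :=
  (A i) ⬝ᵥ ((vaidyaMat A b x)⁻¹ *ᵥ (A i)) / (slack A b x i) ^ 2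

/-- Rescaled constraint matrix `A_x = S_x⁻¹ A`. -/
def Amat {d m : ℕ} (A : Matrix (Fin m) (Fin d) ℝ) (b : Fin m → ℝ) (x : Fin d → ℝ) :
    Matrix (Fin m) (Fin d) ℝ :=
  Matrix.of fun i j => A i j / slack A b x i

/-- The projection matrix `P_x = A_x (A_x^⊤ A_x)⁻¹ A_x^⊤` onto the column space of `A_x`. -/
def projMat {d m : ℕ} (A : Matrix (Fin m) (Fin d) ℝ) (b : Fin m → ℝ) (x : Fin d → ℝ) :
    Matrix (Fin m) (Fin m) ℝ :=
  Amat A b x * (logHess A b x)⁻¹ * (Amat A b x)ᵀ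

/-- Entrywise (Hadamard) square of a matrix. -/
def hadSq {n : ℕ} (M : Matrix (Fin n) (Fin n) ℝ) : Matrix (Fin n) (Fin n) ℝ :=
  Matrix.of fun i j => (M i j) ^ 2

/-- `κ = log₂(2m/d)`. -/
def kappaJ (d m : ℕ) : ℝ := Real.logb 2 ((2 * m : ℝ) / d)

/-- `α = 1 − 1/log₂(2m/d)`. -/
def alphaJ (d m : ℕ) : ℝ := 1 - 1 / Real.logb 2 ((2 * m : ℝ) / d)

/-- `β_J = d/(2m)`. -/
def betaJ (d m : ℕ) : ℝ := (d : ℝ) / (2 * m)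

/-- The weighted projection matrix
`P_{x,w} = W^{α/2} A_x (A_x^⊤ W^α A_x)⁻¹ A_x^⊤ W^{α/2}`. -/
def johnProj {d m : ℕ} (A : Matrix (Fin m) (Fin d) ℝ) (b : Fin m → ℝ) (x : Fin d → ℝ)
    (w : Fin m → ℝ) : Matrix (Fin m) (Fin m) ℝ :=
  Matrix.diagonal (fun i => w i ^ (alphaJ d m / 2)) * Amat A b x *
    ((Amat A b x)ᵀ * Matrix.diagonal (fun i => w i ^ alphaJ d m) * Amat A b x)⁻¹ *
    (Amat A b x)ᵀ * Matrix.diagonal (fun i => w i ^ (alphaJ d m / 2))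

/-- `w` is a positive solution of the John fixed-point equations
`w_i = (P_{x,w})_{ii} + β_J` at `x`. -/
def IsJohnWeight {d m : ℕ} (A : Matrix (Fin m) (Fin d) ℝ) (b : Fin m → ℝ) (x : Fin d → ℝ)
    (w : Fin m → ℝ) : Prop :=
  (∀ i, 0 < w i) ∧ ∀ i, w i = johnProj A b x w i i + betaJ d m

/-- The John matrix `J_x = Σ_i w_i a_i a_i^⊤ / s_{x,i}²` built from weights `w`. -/
def johnMat {d m : ℕ} (A : Matrix (Fin m) (Fin d) ℝ) (b : Fin m → ℝ) (x : Fin d → ℝ)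
    (w : Fin m → ℝ) : Matrix (Fin d) (Fin d) ℝ :=
  ∑ i : Fin m, (w i / (slack A b x i) ^ 2) • vecMulVec (A i) (A i)

/-- The diagonal matrix `G = diag(w)`. -/
def Gmat {m : ℕ} (w : Fin m → ℝ) : Matrix (Fin m) (Fin m) ℝ := Matrix.diagonal w

/-- `Λ = Σ_{x,w} − P_{x,w}^{(2)}`: diagonal of the weighted projection minus its
Hadamard square. -/
def lamMat {d m : ℕ} (A : Matrix (Fin m) (Fin d) ℝ) (b : Fin m → ℝ) (x : Fin d → ℝ)
    (w : Fin m → ℝ) : Matrix (Fin m) (Fin m) ℝ :=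
  Matrix.diagonal (fun i => johnProj A b x w i i) - hadSq (johnProj A b x w)

/-!
Write `G − αΛ = diag(c) + α H` with `H = P ⊙ P`, which is positive semidefinite by the Schur
product theorem, and `c = (1 − α) w + αβ ≥ w / κ`. The `i`-th column `v` of `(G − αΛ)⁻¹` satisfies
`c_i v = e_i − α z` with `z = (G − αΛ)⁻¹ H e_i`. By Cauchy–Schwarz,
`(Σ_j w_j |z_j|)² ≤ (Σ_j w_j) · κ zᵀ(G − αΛ)z`, and `α zᵀ(G − αΛ)z ≤ H_ii = P_ii² ≤ (κ c_i)²`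
because `G − αΛ ⪰ αH`. Since `P` is an orthogonal projection of rank `d`, the fixed-point equations
give `Σ_j w_j = d + mβ = 3d/2`, whence `Σ_j w_j |v_j| ≤ κ + √(3d/2) κ^{3/2} ≤ 3√d κ^{3/2}`.
The row sums are column sums, `G − αΛ` being symmetric.
-/

section DiagonalPlusPosSemidef

variable {n : Type*} [Fintype n] [DecidableEq n]

/-- With `z = B⁻¹ H y`, expand `0 ≤ (αz − y)ᵀ H (αz − y)` and use `α zᵀHz ≤ zᵀBz = zᵀHy`. -/
theorem dotProduct_inv_mulVec_le_of_posSemidef {B H : Matrix n n ℝ} {α : ℝ}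
    (hH : H.PosSemidef) (hα : 0 ≤ α) (hB : IsUnit B) (hBH : (B - α • H).PosSemidef)
    (y : n → ℝ) :
    α * ((H *ᵥ y) ⬝ᵥ (B⁻¹ *ᵥ (H *ᵥ y))) ≤ y ⬝ᵥ (H *ᵥ y) := by
  set z := B⁻¹ *ᵥ (H *ᵥ y)
  have hBz : B *ᵥ z = H *ᵥ y := by
    rw [Matrix.mulVec_mulVec, Matrix.mul_nonsing_inv _ ((B.isUnit_iff_isUnit_det).mp hB),
      Matrix.one_mulVec]
  have hHT : Hᵀ = H := by
    simpa [Matrix.conjTranspose_eq_transpose_of_trivial] using hH.isHermitian.eq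
  have hHsymm : y ⬝ᵥ (H *ᵥ z) = z ⬝ᵥ (H *ᵥ y) := by
    rw [dotProduct_mulVec, ← Matrix.mulVec_transpose, hHT, dotProduct_comm]
  have hzBz : α * (z ⬝ᵥ (H *ᵥ z)) ≤ z ⬝ᵥ (H *ᵥ y) := by
    have := hBH.dotProduct_mulVec_nonneg z
    simp only [star_trivial, Matrix.sub_mulVec, Matrix.smul_mulVec, dotProduct_sub,
      dotProduct_smul, smul_eq_mul, hBz] at this
    linarith
  have hcross := hH.dotProduct_mulVec_nonneg (α • z - y)
  simp only [star_trivial, Matrix.mulVec_sub, Matrix.mulVec_smul, dotProduct_sub, sub_dotProduct,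
    dotProduct_smul, smul_dotProduct, smul_eq_mul, hHsymm] at hcross
  rw [dotProduct_comm (H *ᵥ y)]
  nlinarith [mul_le_mul_of_nonneg_left hzBz hα]

variable {c w : n → ℝ} {H : Matrix n n ℝ} {α κ : ℝ}

omit [Fintype n] in
theorem diagonal_add_smul_posDef (hc : ∀ j, 0 < c j) (hH : H.PosSemidef) (hα : 0 ≤ α) :
    (diagonal c + α • H).PosDef :=
  (PosDef.diagonal hc).add_posSemidef (hH.smul hα)

theorem smul_inv_mulVec_single (hB : IsUnit (diagonal c + α • H)) (i : n) :
    c i • ((diagonal c + α • H)⁻¹ *ᵥ Pi.single i 1) =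
      Pi.single i 1 - α • ((diagonal c + α • H)⁻¹ *ᵥ (H *ᵥ Pi.single i 1)) := by
  set B := diagonal c + α • H
  have hBe : B *ᵥ Pi.single i 1 = c i • Pi.single i 1 + α • (H *ᵥ Pi.single i 1) := by
    rw [Matrix.add_mulVec, Matrix.smul_mulVec, mulVec_single, ← Pi.single_smul']
    congr 1
    ext j
    simp [Pi.single_apply, eq_comm]
  have := congrArg (B⁻¹ *ᵥ ·) hBe
  simp only [Matrix.mulVec_add, Matrix.mulVec_smul] at this
  rw [Matrix.mulVec_mulVec, Matrix.nonsing_inv_mul _ ((B.isUnit_iff_isUnit_det).mp hB),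
    Matrix.one_mulVec] at this
  rw [eq_sub_iff_add_eq, ← this]

theorem sum_mul_sq_le_dotProduct_mulVec (hH : H.PosSemidef) (hα : 0 ≤ α) (hκ : 0 ≤ κ)
    (hwc : ∀ j, w j ≤ κ * c j) (z : n → ℝ) :
    ∑ j, w j * z j ^ 2 ≤ κ * (z ⬝ᵥ ((diagonal c + α • H) *ᵥ z)) := by
  have hHz := hH.dotProduct_mulVec_nonneg z
  rw [star_trivial] at hHz
  calc ∑ j, w j * z j ^ 2 ≤ κ * ∑ j, c j * z j ^ 2 := by
        rw [Finset.mul_sum]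
        refine Finset.sum_le_sum fun j _ => ?_
        nlinarith [hwc j, sq_nonneg (z j)]
    _ ≤ κ * (z ⬝ᵥ ((diagonal c + α • H) *ᵥ z)) := by
        gcongr
        rw [Matrix.add_mulVec, dotProduct_add, Matrix.smul_mulVec, dotProduct_smul, smul_eq_mul]
        have : ∑ j, c j * z j ^ 2 = z ⬝ᵥ (diagonal c *ᵥ z) := by
          simp only [dotProduct, mulVec_diagonal]
          exact Finset.sum_congr rfl fun j _ => by ring
        nlinarith [mul_nonneg hα hHz]

theorem mul_sum_mul_abs_inv_apply_le (hc : ∀ j, 0 < c j) (hH : H.PosSemidef) (hα0 : 0 ≤ α)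
    (hα1 : α ≤ 1) (hw : ∀ j, 0 ≤ w j) (hwc : ∀ j, w j ≤ κ * c j) (i : n) :
    c i * ∑ j, w j * |(diagonal c + α • H)⁻¹ j i| ≤ w i + √((∑ j, w j) * κ * H i i) := by
  set B := diagonal c + α • H
  have hB : IsUnit B := (diagonal_add_smul_posDef hc hH hα0).isUnit
  have hκ : 0 ≤ κ := by nlinarith [hw i, hwc i, hc i]
  set e : n → ℝ := Pi.single i 1
  set z := B⁻¹ *ᵥ (H *ᵥ e)
  set S := ∑ j, w j * |z j|
  have hcol : ∀ j, c i * B⁻¹ j i = e j - α * z j := fun j => by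
    have h := congrFun (smul_inv_mulVec_single hB i) j
    rwa [Pi.smul_apply, smul_eq_mul, mulVec_single_one B⁻¹, col_apply] at h
  have hsplit : c i * ∑ j, w j * |B⁻¹ j i| ≤ w i + α * S := by
    calc c i * ∑ j, w j * |B⁻¹ j i| = ∑ j, w j * |e j - α * z j| := by
          rw [Finset.mul_sum]
          refine Finset.sum_congr rfl fun j _ => ?_
          rw [← hcol, abs_mul, abs_of_pos (hc i)]; ring
      _ ≤ ∑ j, w j * (e j + α * |z j|) := by
          refine Finset.sum_le_sum fun j _ => mul_le_mul_of_nonneg_left ?_ (hw j)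
          have he : 0 ≤ e j := by simp only [e, Pi.single_apply]; split_ifs <;> norm_num
          calc |e j - α * z j| ≤ |e j| + |α * z j| := abs_sub _ _
            _ = e j + α * |z j| := by rw [abs_of_nonneg he, abs_mul, abs_of_nonneg hα0]
      _ = w i + α * S := by
          simp [mul_add, Finset.sum_add_distrib, e, mul_left_comm _ α, ← Finset.mul_sum, S,
            Pi.single_apply]
  have hq : α * (z ⬝ᵥ (B *ᵥ z)) ≤ H i i := by
    have hBH : B - α • H = diagonal c := add_sub_cancel_right _ _
    have := dotProduct_inv_mulVec_le_of_posSemidef hH hα0 hB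
      (hBH ▸ PosSemidef.diagonal fun j => (hc j).le) e
    have hHe : e ⬝ᵥ (H *ᵥ e) = H i i := by simp [e]
    rwa [Matrix.mulVec_mulVec, Matrix.mul_nonsing_inv _ ((B.isUnit_iff_isUnit_det).mp hB),
      Matrix.one_mulVec, dotProduct_comm, ← hHe]
  have hCS : S ^ 2 ≤ (∑ j, w j) * ∑ j, w j * z j ^ 2 :=
    Finset.sum_sq_le_sum_mul_sum_of_sq_le_mul _ (fun j _ => hw j)
      (fun j _ => mul_nonneg (hw j) (sq_nonneg _)) fun j _ => by rw [mul_pow, sq_abs]; nlinarith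
  have hwz := sum_mul_sq_le_dotProduct_mulVec hH hα0 hκ hwc z
  have hT : 0 ≤ ∑ j, w j := Finset.sum_nonneg fun j _ => hw j
  have hHii : 0 ≤ H i i := hH.diag_nonneg
  have hαS : (α * S) ^ 2 ≤ (∑ j, w j) * κ * H i i := by
    calc (α * S) ^ 2 ≤ α ^ 2 * ((∑ j, w j) * (κ * (z ⬝ᵥ (B *ᵥ z)))) := by
          rw [mul_pow]; gcongr; exact hCS.trans (by gcongr)
      _ = α * ((∑ j, w j) * κ * (α * (z ⬝ᵥ (B *ᵥ z)))) := by ring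
      _ ≤ α * ((∑ j, w j) * κ * H i i) := by gcongr
      _ ≤ (∑ j, w j) * κ * H i i :=
          mul_le_of_le_one_left (mul_nonneg (mul_nonneg hT hκ) hHii) hα1
  linarith [le_abs_self (α * S), Real.abs_le_sqrt hαS]

omit [Fintype n] in
theorem diagonal_sub_smul_eq (p : n → ℝ) (H : Matrix n n ℝ) (α : ℝ) :
    diagonal w - α • (diagonal p - H) = diagonal (w - α • p) + α • H := by
  rw [smul_sub, ← diagonal_smul, Pi.sub_def, ← diagonal_sub]; abel

theorem sum_mul_abs_inv_johnSystem_le {P : Matrix n n ℝ} {β : ℝ} (hP : P.PosSemidef)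
    (hβ : 0 < β) (hκ : 1 ≤ κ) (hw : ∀ j, w j = P j j + β) (i : n) :
    ∑ j, w j * |(diagonal w - (1 - 1 / κ) • (diagonal (fun k => P k k) - P ⊙ P))⁻¹ j i| ≤
      κ + √(∑ j, w j) * (κ * √κ) := by
  set α := 1 - 1 / κ
  have hκ0 : 0 < κ := by linarith
  have hα0 : 0 ≤ α := by simp only [α, sub_nonneg]; exact div_le_one_of_le₀ hκ hκ0.le
  have hα1 : α ≤ 1 := by simp only [α]; linarith [one_div_pos.mpr hκ0]
  set c := w - α • fun k => P k k
  have hc : ∀ j, c j = w j / κ + α * β := fun j => by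
    simp only [c, Pi.sub_apply, Pi.smul_apply, smul_eq_mul, hw j, α]; field_simp; ring
  have hPw : ∀ j, 0 ≤ P j j ∧ P j j ≤ w j := fun j => ⟨hP.diag_nonneg, by linarith [hw j]⟩
  have hwpos : ∀ j, 0 < w j := fun j => by linarith [hw j, (hPw j).1]
  have hcpos : ∀ j, 0 < c j := fun j => by
    rw [hc]; have := div_pos (hwpos j) hκ0; positivity
  have hwc : ∀ j, w j ≤ κ * c j := fun j => by
    rw [hc, mul_add, mul_div_cancel₀ _ hκ0.ne']
    have := mul_nonneg hκ0.le (mul_nonneg hα0 hβ.le); linarith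
  have hT : 0 ≤ ∑ j, w j := Finset.sum_nonneg fun j _ => (hwpos j).le
  have hcol := mul_sum_mul_abs_inv_apply_le hcpos (hP.hadamard hP) hα0 hα1
    (fun j => (hwpos j).le) hwc i
  rw [← diagonal_sub_smul_eq] at hcol
  have hroot : √((∑ j, w j) * κ * (P ⊙ P) i i) ≤ √(∑ j, w j) * √κ * (κ * c i) := by
    rw [← Real.sqrt_mul hT, ← Real.sqrt_sq (by nlinarith [hcpos i] : 0 ≤ κ * c i),
      ← Real.sqrt_mul (by positivity)]
    refine Real.sqrt_le_sqrt (mul_le_mul_of_nonneg_left ?_ (by positivity))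
    rw [hadamard_apply, ← sq]
    exact pow_le_pow_left₀ (hPw i).1 ((hPw i).2.trans (hwc i)) 2
  refine le_of_mul_le_mul_left ?_ (hcpos i)
  calc c i * ∑ j, w j * |_| ≤ w i + √((∑ j, w j) * κ * (P ⊙ P) i i) := hcol
    _ ≤ κ * c i + √(∑ j, w j) * √κ * (κ * c i) := add_le_add (hwc i) hroot
    _ = c i * (κ + √(∑ j, w j) * (κ * √κ)) := by ring

omit [Fintype n] in
theorem johnSystem_isSymm {P : Matrix n n ℝ} (hP : P.PosSemidef) (p : n → ℝ) (α : ℝ) :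
    (diagonal w - α • (diagonal p - P ⊙ P)).IsSymm :=
  (isSymm_diagonal w).sub
    (((isSymm_diagonal p).sub (isHermitian_iff_isSymm.mp (hP.hadamard hP).isHermitian)).smul α)

end DiagonalPlusPosSemidef

theorem mulVec_injective_of_rank_eq {m n K : Type*} [Fintype m] [Fintype n] [Field K]
    {A : Matrix m n K} (hA : A.rank = Fintype.card n) : Function.Injective A.mulVec := by
  have h := LinearMap.finrank_range_add_finrank_ker A.mulVecLin
  rw [← Matrix.rank, hA, Module.finrank_fintype_fun_eq_card, add_eq_left,
    Submodule.finrank_eq_zero, LinearMap.ker_eq_bot] at h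
  exact h

section Projection

variable {m n : Type*} [Fintype m] [Fintype n] [DecidableEq n]

theorem posSemidef_mul_inv_transpose_mul_self_mul_transpose (N : Matrix m n ℝ) :
    (N * (Nᵀ * N)⁻¹ * Nᵀ).PosSemidef := by
  simpa only [conjTranspose_eq_transpose_of_trivial] using
    (posSemidef_conjTranspose_mul_self N).inv.mul_mul_conjTranspose_same N

theorem trace_mul_inv_transpose_mul_self_mul_transpose {N : Matrix m n ℝ}
    (hN : Function.Injective N.mulVec) :
    (N * (Nᵀ * N)⁻¹ * Nᵀ).trace = Fintype.card n := by
  have hQ : IsUnit (Nᵀ * N) := by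
    simpa only [conjTranspose_eq_transpose_of_trivial] using
      (PosDef.conjTranspose_mul_self N hN).isUnit
  rw [trace_mul_comm, ← Matrix.mul_assoc, Matrix.mul_nonsing_inv _
    (((Nᵀ * N).isUnit_iff_isUnit_det).mp hQ), trace_one]

end Projection

theorem hadSq_eq_hadamard {n : ℕ} (M : Matrix (Fin n) (Fin n) ℝ) : hadSq M = M ⊙ M := by
  ext i j; simp [hadSq, sq]

theorem one_le_kappaJ {d m : ℕ} (hd : 0 < d) (hdm : d ≤ m) : 1 ≤ kappaJ d m := by
  have hd0 : (0 : ℝ) < d := by exact_mod_cast hd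
  have h2 : (2 : ℝ) ≤ 2 * m / d := by
    rw [le_div_iff₀ hd0]; have : (d : ℝ) ≤ m := by exact_mod_cast hdm
    linarith
  rw [kappaJ, ← Real.logb_self_eq_one (b := 2) (by norm_num)]
  exact Real.logb_le_logb_of_le (by norm_num) (by norm_num) h2

section John

variable {d m : ℕ} (A : Matrix (Fin m) (Fin d) ℝ) (b : Fin m → ℝ) (x : Fin d → ℝ)
  (w : Fin m → ℝ)

def weightedAmat : Matrix (Fin m) (Fin d) ℝ :=
  diagonal (fun i => w i ^ (alphaJ d m / 2)) * Amat A b x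

theorem Amat_eq_diagonal_mul : Amat A b x = diagonal (fun i => (slack A b x i)⁻¹) * A := by
  ext i j; simp [Amat, diagonal_mul, div_eq_inv_mul]

variable {A b x w}

theorem johnProj_eq (hw : ∀ i, 0 < w i) :
    johnProj A b x w =
      weightedAmat A b x w * ((weightedAmat A b x w)ᵀ * weightedAmat A b x w)⁻¹ *
        (weightedAmat A b x w)ᵀ := by
  have hsq : diagonal (fun i => w i ^ (alphaJ d m / 2)) *
      diagonal (fun i => w i ^ (alphaJ d m / 2)) = diagonal (fun i => w i ^ alphaJ d m) := by
    rw [diagonal_mul_diagonal]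
    congr 1; funext i
    rw [← Real.rpow_add (hw i), add_halves]
  simp only [johnProj, weightedAmat, transpose_mul, diagonal_transpose, Matrix.mul_assoc]
  rw [← Matrix.mul_assoc (diagonal _) (diagonal _), hsq]

theorem weightedAmat_mulVec_injective (hrank : A.rank = d) (hx : x ∈ interiorPoly A b)
    (hw : ∀ i, 0 < w i) : Function.Injective (weightedAmat A b x w).mulVec := by
  refine mulVec_injective_of_rank_eq ?_
  rw [weightedAmat, Amat_eq_diagonal_mul, ← Matrix.mul_assoc, diagonal_mul_diagonal,
    rank_mul_eq_right_of_isUnit_det, hrank, Fintype.card_fin]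
  rw [← isUnit_iff_isUnit_det, isUnit_diagonal, Pi.isUnit_iff]
  exact fun i => (mul_pos (Real.rpow_pos_of_pos (hw i) _) (inv_pos.mpr (hx i))).ne'.isUnit

theorem johnProj_posSemidef (hw : ∀ i, 0 < w i) : (johnProj A b x w).PosSemidef := by
  rw [johnProj_eq hw]
  exact posSemidef_mul_inv_transpose_mul_self_mul_transpose _

theorem trace_johnProj (hrank : A.rank = d) (hx : x ∈ interiorPoly A b) (hw : ∀ i, 0 < w i) :
    (johnProj A b x w).trace = d := by
  rw [johnProj_eq hw, trace_mul_inv_transpose_mul_self_mul_transpose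
    (weightedAmat_mulVec_injective hrank hx hw), Fintype.card_fin]

theorem IsJohnWeight.sum_eq (hd : 0 < d) (hdm : d ≤ m) (hrank : A.rank = d)
    (hx : x ∈ interiorPoly A b) (hw : IsJohnWeight A b x w) :
    ∑ i, w i = 3 * d / 2 := by
  have hm : (m : ℝ) ≠ 0 := by exact_mod_cast (hd.trans_le hdm).ne'
  rw [Finset.sum_congr rfl fun i _ => hw.2 i, Finset.sum_add_distrib]
  rw [show ∑ i, johnProj A b x w i i = d from trace_johnProj hrank hx hw.1]
  simp only [Finset.sum_const, Finset.card_univ, Fintype.card_fin, nsmul_eq_mul, betaJ]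
  field_simp; ring

end John

theorem add_sqrt_mul_le_three_mul_sqrt_mul_rpow {d κ : ℝ} (hd : 1 ≤ d) (hκ : 1 ≤ κ) :
    κ + √(3 * d / 2) * (κ * √κ) ≤ 3 * √d * κ ^ ((3 : ℝ) / 2) := by
  have hrpow : κ ^ ((3 : ℝ) / 2) = κ * √κ := by
    rw [show (3 : ℝ) / 2 = 1 + 1 / 2 by norm_num, Real.rpow_add (by linarith), Real.rpow_one,
      Real.sqrt_eq_rpow]
  have hsd : 1 ≤ √d := Real.one_le_sqrt.mpr hd
  have hsκ : 1 ≤ √κ := Real.one_le_sqrt.mpr hκ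
  have h32 : √(3 * d / 2) ≤ 2 * √d := by
    have h4 : √(4 * d) = 2 * √d := by
      rw [Real.sqrt_mul (by norm_num), show (4 : ℝ) = 2 ^ 2 by norm_num, Real.sqrt_sq (by norm_num)]
    exact h4 ▸ Real.sqrt_le_sqrt (by linarith)
  have hκ0 : 0 ≤ κ := by linarith
  have hκle : κ ≤ √d * (κ * √κ) := by
    simpa using mul_le_mul hsd (le_mul_of_one_le_right hκ0 hsκ) hκ0 (by positivity)
  rw [hrpow]
  nlinarith [mul_le_mul_of_nonneg_right h32 (by positivity : 0 ≤ κ * √κ)]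

/-- ℓ₁- and operator-∞ bounds for `(G − αΛ)⁻¹G`: for every `i`,
`‖G(G−αΛ)⁻¹ e_i‖₁ ≤ 3√d · κ^{3/2}`, and consequently
`‖(G−αΛ)⁻¹G‖_∞ = max_i Σ_j |((G−αΛ)⁻¹G)_{ij}| ≤ 3√d · κ^{3/2}`. -/
theorem john_M_l1_linfty_bounds (d m : ℕ) (hd : 0 < d) (hdm : d ≤ m)
    (A : Matrix (Fin m) (Fin d) ℝ) (b : Fin m → ℝ) (hrank : A.rank = d)
    (x : Fin d → ℝ) (hx : x ∈ interiorPoly A b)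
    (w : Fin m → ℝ) (hw : IsJohnWeight A b x w) :
    (∀ i, ∑ j, |(Gmat w * (Gmat w - alphaJ d m • lamMat A b x w)⁻¹) j i| ≤
      3 * Real.sqrt d * kappaJ d m ^ ((3 : ℝ) / 2)) ∧
    (∀ i, ∑ j, |((Gmat w - alphaJ d m • lamMat A b x w)⁻¹ * Gmat w) i j| ≤
      3 * Real.sqrt d * kappaJ d m ^ ((3 : ℝ) / 2)) := by
  have hP : (johnProj A b x w).PosSemidef := johnProj_posSemidef hw.1
  have hκ := one_le_kappaJ hd hdm
  set B := Gmat w - alphaJ d m • lamMat A b x w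
  have hB : B = diagonal w - (1 - 1 / kappaJ d m) •
      (diagonal (fun k => johnProj A b x w k k) - johnProj A b x w ⊙ johnProj A b x w) := by
    rw [← hadSq_eq_hadamard]; rfl
  have hcol (i : Fin m) : ∑ j, w j * |B⁻¹ j i| ≤ 3 * √d * kappaJ d m ^ ((3 : ℝ) / 2) := by
    have hβ : 0 < betaJ d m :=
      div_pos (Nat.cast_pos.mpr hd) (mul_pos two_pos (Nat.cast_pos.mpr (hd.trans_le hdm)))
    have := sum_mul_abs_inv_johnSystem_le hP hβ hκ hw.2 i
    rw [← hB, hw.sum_eq hd hdm hrank hx] at this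
    exact this.trans (add_sqrt_mul_le_three_mul_sqrt_mul_rpow (by exact_mod_cast hd) hκ)
  have hBinv : B⁻¹.IsSymm := (hB ▸ johnSystem_isSymm hP _ _).inv
  refine ⟨fun i => ?_, fun i => ?_⟩
  · simpa only [Gmat, diagonal_mul, abs_mul, abs_of_pos (hw.1 _)] using hcol i
  · simpa only [Gmat, mul_diagonal, abs_mul, abs_of_pos (hw.1 _), hBinv.apply, mul_comm]
      using hcol i

end PolytopeWalks
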